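/- For all positive integers m and n, let Θ : Fin m → M₃(ℝ) with each Θ(x) in the convex hull of the 24 extremal states {Ω₀, …, Ω₂₃}, and let F : Fin n → M₃(ℝ) with each F(y) a nonnegative linear combination of the 16 factorized extremal normalized effects {E₀, …, E₁₅} and \sum_y F(y) = Ē. Then the m×n matrix p with p_{x,y} = Tr(F(y)ᵀ Θ(x)) belongs to C(m,n,4). In other words, the PR Model (which includes all entangled states but only factorized effects) satisfies the no-hypersignaling principle: its bipartite signaling dimension is at most 4. -/

import Mathlib

open Matrix

/-- The four extremal states of the squit. -/
noncomputable def ws : Fin 4 → (Fin 3 → ℝ) :=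
  ![![1, 0, 1], ![0, 1, 1], ![-1, 0, 1], ![0, -1, 1]]

/-- The four extremal normalized effects of the squit. -/
noncomputable def es : Fin 4 → (Fin 3 → ℝ) :=
  ![![1, 1, 1], ![-1, 1, 1], ![-1, -1, 1], ![1, -1, 1]]

/-- The eight entangled extremal bipartite states `Ω₁₆, …, Ω₂₃`. -/
noncomputable def OmegaEnt : Fin 8 → Matrix (Fin 3) (Fin 3) ℝ :=
  ![(1/2 : ℝ) • Matrix.of ![![-1, 1, 0], ![1, 1, 0], ![0, 0, 2]],
    (1/2 : ℝ) • Matrix.of ![![-1, -1, 0], ![-1, 1, 0], ![0, 0, 2]],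
    (1/2 : ℝ) • Matrix.of ![![1, -1, 0], ![-1, -1, 0], ![0, 0, 2]],
    (1/2 : ℝ) • Matrix.of ![![1, 1, 0], ![1, -1, 0], ![0, 0, 2]],
    (1/2 : ℝ) • Matrix.of ![![-1, -1, 0], ![1, -1, 0], ![0, 0, 2]],
    (1/2 : ℝ) • Matrix.of ![![1, -1, 0], ![1, 1, 0], ![0, 0, 2]],
    (1/2 : ℝ) • Matrix.of ![![1, 1, 0], ![-1, 1, 0], ![0, 0, 2]],
    (1/2 : ℝ) • Matrix.of ![![-1, 1, 0], ![-1, -1, 0], ![0, 0, 2]]]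

/-- The eight entangled extremal bipartite normalized effects `E₁₆, …, E₂₃`. -/
noncomputable def EEnt : Fin 8 → Matrix (Fin 3) (Fin 3) ℝ :=
  ![Matrix.of ![![-1, 1, 0], ![1, 1, 0], ![0, 0, 1]],
    Matrix.of ![![-1, -1, 0], ![-1, 1, 0], ![0, 0, 1]],
    Matrix.of ![![1, -1, 0], ![-1, -1, 0], ![0, 0, 1]],
    Matrix.of ![![1, 1, 0], ![1, -1, 0], ![0, 0, 1]],
    Matrix.of ![![-1, 1, 0], ![-1, -1, 0], ![0, 0, 1]],
    Matrix.of ![![1, 1, 0], ![-1, 1, 0], ![0, 0, 1]],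
    Matrix.of ![![1, -1, 0], ![1, 1, 0], ![0, 0, 1]],
    Matrix.of ![![-1, -1, 0], ![1, -1, 0], ![0, 0, 1]]]

/-- The 24 extremal bipartite states `Ω₀, …, Ω₂₃`: the 16 factorized states
`Ω_{4i+j} = ω_i ω_jᵀ` followed by the 8 entangled ones. -/
noncomputable def Omegas : Fin 24 → Matrix (Fin 3) (Fin 3) ℝ := fun x =>
  if h : (x : ℕ) < 16 then
    Matrix.vecMulVec (ws ⟨(x : ℕ) / 4, by omega⟩) (ws ⟨(x : ℕ) % 4, by omega⟩)
  else OmegaEnt ⟨(x : ℕ) - 16, by have := x.isLt; omega⟩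

/-- The 24 extremal bipartite normalized effects `E₀, …, E₂₃`: the 16 factorized
effects `E_{4i+j} = e_i e_jᵀ` followed by the 8 entangled ones. -/
noncomputable def Effs : Fin 24 → Matrix (Fin 3) (Fin 3) ℝ := fun x =>
  if h : (x : ℕ) < 16 then
    Matrix.vecMulVec (es ⟨(x : ℕ) / 4, by omega⟩) (es ⟨(x : ℕ) % 4, by omega⟩)
  else EEnt ⟨(x : ℕ) - 16, by have := x.isLt; omega⟩

/-- The bipartite unit effect `Ē = ē ēᵀ` with `ē = (0,0,1)`. -/
noncomputable def Ebar : Matrix (Fin 3) (Fin 3) ℝ :=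
  Matrix.vecMulVec ![0, 0, 1] ![0, 0, 1]

/-- `V m n d` : the set of `m × n` real matrices with all entries in `{0,1}`,
each row summing to `1`, and with at most `d` nonzero columns. -/
def V (m n d : ℕ) : Set (Matrix (Fin m) (Fin n) ℝ) :=
  {p | (∀ x y, p x y = 0 ∨ p x y = 1) ∧ (∀ x, ∑ y, p x y = 1) ∧
       ({y : Fin n | ∃ x, p x y ≠ 0}).ncard ≤ d}

/-- `C m n d` : the convex hull of `V m n d`. -/
def C (m n d : ℕ) : Set (Matrix (Fin m) (Fin n) ℝ) := convexHull ℝ (V m n d)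

/-!
Every effect `F y` is a nonnegative combination of the factorized effects `eᵢ eⱼᵀ`, and so is
their sum `Ē`. Since `e₀ + e₂ = e₁ + e₃ = 2ē`, the coefficients of `Ē` have vanishing correlators
in each of the four basis blocks and balanced marginals, and a two-point coupling splits them into
a mixture of one-way wirings of the local measurements `{e₀, e₂}` and `{e₁, e₃}`: one party
measures, and the other chooses its basis according to that outcome. Each wiring is a
four-outcome measurement, and every extremal state, entangled or not, gives its outcomes
nonnegative probabilities. Splitting each `F y` proportionally, the correlation becomes
`∑ᵥ wᵥ Aᵥ Bᵥ` with `Aᵥ` the outcome distributions of wiring `v` and `Bᵥ` a classical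
post-processing; a product of stochastic matrices through four symbols lies in `C m n 4`, which
is convex.
-/

section Stochastic

variable {ι κ μ : Type*} [Fintype κ]

theorem mul_mem_convexHull_image2 {s : Set (Matrix ι κ ℝ)} {t : Set (Matrix κ μ ℝ)}
    {A : Matrix ι κ ℝ} {B : Matrix κ μ ℝ} (hA : A ∈ convexHull ℝ s) (hB : B ∈ convexHull ℝ t) :
    A * B ∈ convexHull ℝ (Set.image2 (· * ·) s t) := by
  set H := convexHull ℝ (Set.image2 (· * ·) s t)
  have hmul_left : ∀ B' ∈ t, A * B' ∈ H := by
    intro B' hB'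
    have hconv : Convex ℝ ((· * B') ⁻¹' H) := (convex_convexHull ℝ _).is_linear_preimage
      ⟨fun X Y => Matrix.add_mul X Y B', fun c X => Matrix.smul_mul c X B'⟩
    exact convexHull_min (fun A' hA' => show A' * B' ∈ H from
      subset_convexHull ℝ _ (Set.mem_image2_of_mem hA' hB')) hconv hA
  have hconv : Convex ℝ ((A * ·) ⁻¹' H) := (convex_convexHull ℝ _).is_linear_preimage
    ⟨fun X Y => Matrix.mul_add A X Y, fun c X => Matrix.mul_smul A c X⟩
  exact convexHull_min hmul_left hconv hB

variable [DecidableEq κ]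

theorem mem_convexHull_submatrix_one [Finite ι] {A : Matrix ι κ ℝ}
    (hA : ∀ i, A i ∈ stdSimplex ℝ κ) :
    A ∈ convexHull ℝ (Set.range fun φ : ι → κ => (1 : Matrix κ κ ℝ).submatrix φ id) := by
  have hA' : A ∈ Set.univ.pi fun _ => convexHull ℝ (Set.range (1 : Matrix κ κ ℝ)) := by
    intro i _
    convert hA i
    exact convexHull_basis_eq_stdSimplex ℝ κ
  rw [← convexHull_pi] at hA'
  refine convexHull_mono ?_ hA'
  intro D hD
  choose φ hφ using fun i => hD i (Set.mem_univ i)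
  exact ⟨φ, funext hφ⟩

theorem submatrix_one_mul_submatrix_one [Fintype μ] [DecidableEq μ] (φ : ι → κ) (ψ : κ → μ) :
    (1 : Matrix κ κ ℝ).submatrix φ id * (1 : Matrix μ μ ℝ).submatrix ψ id
      = (1 : Matrix μ μ ℝ).submatrix (ψ ∘ φ) id := by
  ext i j
  simp only [submatrix_apply, id, mul_apply, one_apply, ite_mul, one_mul, zero_mul,
    Finset.sum_ite_eq, Finset.mem_univ, if_true, Function.comp_apply]

end Stochastic

theorem submatrix_one_mem_V {m n d : ℕ} (φ : Fin m → Fin n) (hφ : (Set.range φ).ncard ≤ d) :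
    (1 : Matrix (Fin n) (Fin n) ℝ).submatrix φ id ∈ V m n d := by
  refine ⟨fun x y => ?_, fun x => ?_, le_trans (Set.ncard_le_ncard ?_) hφ⟩
  · by_cases h : φ x = y <;> simp [one_apply, h]
  · simp [one_apply]
  · rintro y ⟨x, hx⟩
    by_contra h
    exact hx (by simp [show φ x ≠ y from fun h' => h ⟨x, h'⟩])

theorem mul_mem_C {m n d : ℕ} {κ : Type*} [Fintype κ] [DecidableEq κ]
    (hκ : Fintype.card κ ≤ d) {A : Matrix (Fin m) κ ℝ} {B : Matrix κ (Fin n) ℝ}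
    (hA : ∀ x, A x ∈ stdSimplex ℝ κ) (hB : ∀ k, B k ∈ stdSimplex ℝ (Fin n)) :
    A * B ∈ C m n d := by
  refine convexHull_mono ?_ (mul_mem_convexHull_image2 (mem_convexHull_submatrix_one hA)
    (mem_convexHull_submatrix_one hB))
  rintro _ ⟨_, ⟨φ, rfl⟩, _, ⟨ψ, rfl⟩, rfl⟩
  simp only [submatrix_one_mul_submatrix_one]
  refine submatrix_one_mem_V _
    (le_trans (Set.ncard_le_ncard (Set.range_comp_subset_range φ ψ)) ?_)
  calc (Set.range ψ).ncard ≤ (Set.univ : Set κ).ncard := by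
        rw [← Set.image_univ]; exact Set.ncard_image_le
    _ ≤ d := by simpa [Set.ncard_univ] using hκ

theorem exists_coupling {ι : Type*} [Fintype ι] {μ ν : ι → ℝ} (hμ : ∀ i, 0 ≤ μ i)
    (hν : ∀ i, 0 ≤ ν i) (h : ∑ i, μ i = ∑ i, ν i) :
    ∃ π : ι × ι → ℝ, (∀ p, 0 ≤ π p) ∧
      ∀ X Y : ι → ℝ, ∑ i, μ i * X i + ∑ i, ν i * Y i = ∑ p, π p * (X p.1 + Y p.2) := by
  set T := ∑ i, ν i
  refine ⟨fun p => μ p.1 * ν p.2 / T, fun p =>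
    div_nonneg (mul_nonneg (hμ _) (hν _)) (Finset.sum_nonneg fun i _ => hν i), fun X Y => ?_⟩
  rcases eq_or_ne T 0 with hT | hT
  · have hμ0 : μ = 0 := (Fintype.sum_eq_zero_iff_of_nonneg hμ).1 (h.trans hT)
    have hν0 : ν = 0 := (Fintype.sum_eq_zero_iff_of_nonneg hν).1 hT
    simp [hμ0, hν0]
  · have hX : ∀ i, ∑ j, μ i * ν j / T * X i = μ i * X i := fun i => by
      rw [← Finset.sum_mul, ← Finset.sum_div, ← Finset.mul_sum, mul_div_assoc, div_self hT,
        mul_one]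
    have hY : ∀ j, ∑ i, μ i * ν j / T * Y j = ν j * Y j := fun j => by
      rw [← Finset.sum_mul, ← Finset.sum_div, ← Finset.sum_mul, h, mul_div_cancel_left₀ _ hT]
    simp only [Fintype.sum_prod_type, mul_add, Finset.sum_add_distrib, hX]
    rw [Finset.sum_comm (f := fun i j => μ i * ν j / T * Y j)]
    simp only [hY]

theorem exists_row_add_col {k : Fin 2 → Fin 2 → ℝ} (hk : ∀ s t, 0 ≤ k s t)
    (h : k 0 0 + k 1 1 = k 0 1 + k 1 0) :
    ∃ r c : Fin 2 → ℝ, (∀ s, 0 ≤ r s) ∧ (∀ t, 0 ≤ c t) ∧ ∀ s t, k s t = r s + c t := by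
  rcases le_total (k 0 0) (k 0 1) with hle | hle
  · refine ⟨![k 0 0, k 1 0], ![0, k 0 1 - k 0 0], ?_, ?_, ?_⟩
    · simp [Fin.forall_fin_two, hk]
    · simp [Fin.forall_fin_two, hle]
    · simp [Fin.forall_fin_two]; linarith
  · refine ⟨![k 0 1, k 1 1], ![k 0 0 - k 0 1, 0], ?_, ?_, ?_⟩
    · simp [Fin.forall_fin_two, hk]
    · simp [Fin.forall_fin_two, hle]
    · simp [Fin.forall_fin_two]; linarith

section Normalize

variable {ι : Type*} [Fintype ι] [DecidableEq ι]

noncomputable def normalizeOr (i₀ : ι) (μ : ι → ℝ) : ι → ℝ :=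
  if ∑ i, μ i = 0 then Pi.single i₀ 1 else (∑ i, μ i)⁻¹ • μ

theorem normalizeOr_mem_stdSimplex (i₀ : ι) {μ : ι → ℝ} (hμ : ∀ i, 0 ≤ μ i) :
    normalizeOr i₀ μ ∈ stdSimplex ℝ ι := by
  unfold normalizeOr
  split_ifs with h
  · exact single_mem_stdSimplex ℝ i₀
  · refine ⟨fun i => mul_nonneg (inv_nonneg.2 (Finset.sum_nonneg fun j _ => hμ j)) (hμ i), ?_⟩
    simp only [Pi.smul_apply, smul_eq_mul, ← Finset.mul_sum, inv_mul_cancel₀ h]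

theorem sum_mul_normalizeOr (i₀ : ι) {μ : ι → ℝ} (hμ : ∀ i, 0 ≤ μ i) (i : ι) :
    (∑ j, μ j) * normalizeOr i₀ μ i = μ i := by
  unfold normalizeOr
  split_ifs with h
  · rw [h, zero_mul, (Fintype.sum_eq_zero_iff_of_nonneg hμ).1 h, Pi.zero_apply]
  · simp [h]

end Normalize

section Trace

variable {n : Type*} [Fintype n]

theorem trace_transpose_vecMulVec_mul_vecMulVec (a b c d : n → ℝ) :
    trace ((vecMulVec a b)ᵀ * vecMulVec c d) = (a ⬝ᵥ c) * (b ⬝ᵥ d) := by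
  rw [transpose_vecMulVec, vecMulVec_mul_vecMulVec, trace_vecMulVec, dotProduct_smul, smul_eq_mul]

theorem trace_transpose_vecMulVec_mul (a b : n → ℝ) (M : Matrix n n ℝ) :
    trace ((vecMulVec a b)ᵀ * M) = a ⬝ᵥ M *ᵥ b := by
  simp only [trace, diag_apply, mul_apply, transpose_apply, vecMulVec_apply, dotProduct, mulVec,
    Finset.mul_sum]
  rw [Finset.sum_comm]
  exact Finset.sum_congr rfl fun _ _ => Finset.sum_congr rfl fun _ _ => by ring

variable [DecidableEq n]

theorem isLinearMap_trace_transpose_mul (E : Matrix n n ℝ) :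
    IsLinearMap ℝ fun M : Matrix n n ℝ => trace (Eᵀ * M) :=
  ((traceLinearMap n ℝ ℝ).comp (LinearMap.mulLeft ℝ Eᵀ)).isLinear

theorem le_trace_transpose_mul_of_mem_convexHull {s : Set (Matrix n n ℝ)} {E M : Matrix n n ℝ}
    {r : ℝ} (h : ∀ N ∈ s, r ≤ trace (Eᵀ * N)) (hM : M ∈ convexHull ℝ s) :
    r ≤ trace (Eᵀ * M) :=
  convexHull_min h (convex_halfSpace_ge (isLinearMap_trace_transpose_mul E) r) hM

theorem trace_transpose_mul_eq_of_mem_convexHull {s : Set (Matrix n n ℝ)} {E M : Matrix n n ℝ}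
    {r : ℝ} (h : ∀ N ∈ s, trace (Eᵀ * N) = r) (hM : M ∈ convexHull ℝ s) :
    trace (Eᵀ * M) = r :=
  convexHull_min h (convex_hyperplane (isLinearMap_trace_transpose_mul E) r) hM

end Trace

/-- `es (effIdx a s)` is outcome `s` of the local measurement in basis `a`: `{e₀, e₂}` for
`a = 0` and `{e₁, e₃}` for `a = 1`. -/
def effIdx (a s : Fin 2) : Fin 4 := ![![0, 2], ![1, 3]] a s

theorem sum_eq_sum_effIdx {M : Type*} [AddCommMonoid M] (f : Fin 4 → M) :
    ∑ i, f i = ∑ a, ∑ s, f (effIdx a s) := by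
  simp only [Fin.sum_univ_four, Fin.sum_univ_two, effIdx, cons_val_zero, cons_val_one]
  abel

theorem es_effIdx_add (a : Fin 2) :
    es (effIdx a 0) + es (effIdx a 1) = (2 : ℝ) • ![0, 0, 1] := by
  fin_cases a <;> ext k <;> fin_cases k <;> simp [es, effIdx] <;> norm_num

/-- With `es (effIdx a s) = ē ± fₐ`, the `f fᵀ`, `f ēᵀ`, `ē fᵀ` and `ē ēᵀ` components of the
identity give the four block correlators, the two marginal balances and the total mass. -/
theorem balanced_of_sum_eq_Ebar {c : Fin 4 → Fin 4 → ℝ}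
    (hE : ∑ i, ∑ j, c i j • vecMulVec (es i) (es j) = Ebar) :
    (∀ a b, c (effIdx a 0) (effIdx b 0) + c (effIdx a 1) (effIdx b 1)
      = c (effIdx a 0) (effIdx b 1) + c (effIdx a 1) (effIdx b 0)) ∧
    (∀ a, ∑ b, ∑ t, c (effIdx a 0) (effIdx b t) = ∑ b, ∑ t, c (effIdx a 1) (effIdx b t)) ∧
    (∀ b, ∑ a, ∑ s, c (effIdx a s) (effIdx b 0) = ∑ a, ∑ s, c (effIdx a s) (effIdx b 1)) ∧
    ∑ i, ∑ j, c i j = 1 := by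
  have entry : ∀ k l, ∑ i, ∑ j, c i j * (es i k * es j l) = Ebar k l := fun k l => by
    simpa [Matrix.sum_apply, vecMulVec_apply] using congrFun (congrFun hE k) l
  have e00 := entry 0 0; have e01 := entry 0 1; have e02 := entry 0 2
  have e10 := entry 1 0; have e11 := entry 1 1; have e12 := entry 1 2
  have e20 := entry 2 0; have e21 := entry 2 1; have e22 := entry 2 2
  simp [Fin.sum_univ_four, es, Ebar, vecMulVec_apply] at e00 e01 e02 e10 e11 e12 e20 e21 e22
  refine ⟨fun a b => ?_, fun a => ?_, fun b => ?_, ?_⟩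
  · fin_cases a <;> fin_cases b <;> simp [effIdx] <;> linarith
  · fin_cases a <;> simp [effIdx, Fin.sum_univ_two] <;> linarith
  · fin_cases b <;> simp [effIdx, Fin.sum_univ_two] <;> linarith
  · simp only [Fin.sum_univ_four]; linarith

/-- One-way wirings of local measurements. In `inl (a, b)` Alice measures basis `a` and Bob then
measures basis `b.1` or `b.2` according to Alice's outcome; `inr (b, a)` is the same with Bob
first. The outcome `(s, t)` (Alice's, Bob's) is the effect `(es i) (es j)ᵀ / 4` with
`(i, j) = v.effect (s, t)`. -/
abbrev Wiring : Type := (Fin 2 × Fin 2 × Fin 2) ⊕ (Fin 2 × Fin 2 × Fin 2)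

def Wiring.effect : Wiring → Fin 2 × Fin 2 → Fin 4 × Fin 4
  | .inl (a, b), (s, t) => (effIdx a s, effIdx (![b.1, b.2] s) t)
  | .inr (b, a), (s, t) => (effIdx (![a.1, a.2] t) s, effIdx b t)

theorem Wiring.sum_vecMulVec_effect (v : Wiring) :
    ∑ k, vecMulVec (es (v.effect k).1) (es (v.effect k).2) = (4 : ℝ) • Ebar := by
  have hEbar : (4 : ℝ) • Ebar = vecMulVec ((2 : ℝ) • ![0, 0, 1]) ((2 : ℝ) • ![0, 0, 1]) := by
    rw [smul_vecMulVec, vecMulVec_smul, smul_smul, Ebar]; norm_num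
  rcases v with ⟨a, b⟩ | ⟨b, a⟩ <;>
    simp only [hEbar, Wiring.effect, Fintype.sum_prod_type, Fin.sum_univ_two, cons_val_zero,
      cons_val_one, ← vecMulVec_add, ← add_vecMulVec, es_effIdx_add]
  rw [add_add_add_comm]
  simp only [← add_vecMulVec, es_effIdx_add, ← vecMulVec_add]

theorem exists_wiring_decomposition {c : Fin 4 → Fin 4 → ℝ} (hc : ∀ i j, 0 ≤ c i j)
    (hE : ∑ i, ∑ j, c i j • vecMulVec (es i) (es j) = Ebar) :
    ∃ w : Wiring → ℝ, (∀ v, 0 ≤ w v) ∧ ∑ v, w v = 1 ∧ ∀ g : Fin 4 → Fin 4 → ℝ,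
      ∑ i, ∑ j, c i j * g i j = ∑ v, w v * ∑ k, g (v.effect k).1 (v.effect k).2 / 4 := by
  obtain ⟨hblock, hrow, hcol, htot⟩ := balanced_of_sum_eq_Ebar hE
  choose R C hR hC hRC using fun a b =>
    exists_row_add_col (fun s t => hc (effIdx a s) (effIdx b t)) (hblock a b)
  choose P hP hPX using fun a => exists_coupling (μ := fun b => R a b 0) (ν := fun b => R a b 1)
    (hR a · 0) (hR a · 1)
    (by have := hrow a; simp only [hRC, Fin.sum_univ_two] at this ⊢; linarith)
  choose Q hQ hQY using fun b => exists_coupling (μ := fun a => C a b 0) (ν := fun a => C a b 1)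
    (hC · b 0) (hC · b 1)
    (by have := hcol b; simp only [hRC, Fin.sum_univ_two] at this ⊢; linarith)
  set w : Wiring → ℝ := Sum.elim (fun v => 4 * P v.1 v.2) (fun v => 4 * Q v.1 v.2)
  have hg : ∀ g : Fin 4 → Fin 4 → ℝ,
      ∑ i, ∑ j, c i j * g i j = ∑ v, w v * ∑ k, g (v.effect k).1 (v.effect k).2 / 4 := by
    intro g
    set X := fun a s b => ∑ t, g (effIdx a s) (effIdx b t)
    set Y := fun b t a => ∑ s, g (effIdx a s) (effIdx b t)
    calc ∑ i, ∑ j, c i j * g i j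
        = ∑ a, ∑ s, ∑ b, ∑ t, (R a b s + C a b t) * g (effIdx a s) (effIdx b t) := by
          simp only [sum_eq_sum_effIdx (fun i => ∑ j, _), sum_eq_sum_effIdx (fun j => _), hRC]
      _ = ∑ a, (∑ b, R a b 0 * X a 0 b + ∑ b, R a b 1 * X a 1 b)
          + ∑ b, (∑ a, C a b 0 * Y b 0 a + ∑ a, C a b 1 * Y b 1 a) := by
          simp only [X, Y, Fin.sum_univ_two]; ring
      _ = ∑ a, ∑ p, P a p * (X a 0 p.1 + X a 1 p.2)
          + ∑ b, ∑ p, Q b p * (Y b 0 p.1 + Y b 1 p.2) := by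
          simp only [hPX, hQY]
      _ = _ := by
          simp only [Fintype.sum_sum_type, w, Sum.elim_inl, Sum.elim_inr,
            Fintype.sum_prod_type (f := fun v : Fin 2 × Fin 2 × Fin 2 => _)]
          congr 1 <;>
            refine Finset.sum_congr rfl fun a _ => Finset.sum_congr rfl fun p _ => ?_ <;>
            simp only [X, Y, Wiring.effect, Fintype.sum_prod_type, Fin.sum_univ_two,
              cons_val_zero, cons_val_one] <;>
            ring
  refine ⟨w, ?_, ?_, hg⟩
  · rintro (v | v) <;> simp [w, hP, hQ]
  · simpa [htot] using (hg fun _ _ => 1).symm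

theorem exists_wiring_postprocessing {n : ℕ} (hn : 0 < n) {c : Fin n → Fin 4 → Fin 4 → ℝ}
    (hc : ∀ y i j, 0 ≤ c y i j)
    (hE : ∑ y, ∑ i, ∑ j, c y i j • vecMulVec (es i) (es j) = Ebar) :
    ∃ (w : Wiring → ℝ) (B : Wiring → Matrix (Fin 2 × Fin 2) (Fin n) ℝ),
      (∀ v, 0 ≤ w v) ∧ ∑ v, w v = 1 ∧ (∀ v k, B v k ∈ stdSimplex ℝ (Fin n)) ∧
      ∀ (g : Fin 4 → Fin 4 → ℝ) y, ∑ i, ∑ j, c y i j * g i j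
        = ∑ v, w v * ∑ k, g (v.effect k).1 (v.effect k).2 * B v k y / 4 := by
  have hE' : ∑ i, ∑ j, (∑ y, c y i j) • vecMulVec (es i) (es j) = Ebar := by
    rw [← hE]
    simp only [Finset.sum_smul]
    exact (Finset.sum_congr rfl fun _ _ => Finset.sum_comm).trans Finset.sum_comm
  obtain ⟨w, hw0, hw1, hdecomp⟩ :=
    exists_wiring_decomposition (fun i j => Finset.sum_nonneg fun y _ => hc y i j) hE'
  set b := fun i j => normalizeOr (⟨0, hn⟩ : Fin n) fun y => c y i j
  refine ⟨w, fun v => of fun k y => b (v.effect k).1 (v.effect k).2 y, hw0, hw1,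
    fun v k => normalizeOr_mem_stdSimplex _ fun y => hc y _ _, fun g y => ?_⟩
  calc ∑ i, ∑ j, c y i j * g i j = ∑ i, ∑ j, (∑ y, c y i j) * (g i j * b i j y) := by
        refine Finset.sum_congr rfl fun i _ => Finset.sum_congr rfl fun j _ => ?_
        rw [mul_left_comm, sum_mul_normalizeOr _ (fun y => hc y i j), mul_comm]
    _ = _ := hdecomp _

theorem Omegas_cases {P : Matrix (Fin 3) (Fin 3) ℝ → Prop}
    (hprod : ∀ p q, P (vecMulVec (ws p) (ws q))) (hent : ∀ t, P (OmegaEnt t)) (s : Fin 24) :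
    P (Omegas s) := by
  unfold Omegas
  split_ifs
  exacts [hprod _ _, hent _]

theorem es_dotProduct_ws_nonneg (i p : Fin 4) : 0 ≤ es i ⬝ᵥ ws p := by
  fin_cases i <;> fin_cases p <;> simp [es, ws, dotProduct, Fin.sum_univ_three]

theorem trace_es_Omegas_nonneg (i j : Fin 4) (s : Fin 24) :
    0 ≤ trace ((vecMulVec (es i) (es j))ᵀ * Omegas s) := by
  refine Omegas_cases (P := fun M => 0 ≤ trace ((vecMulVec (es i) (es j))ᵀ * M))
    (fun p q => ?_) (fun t => ?_) s
  · rw [trace_transpose_vecMulVec_mul_vecMulVec]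
    exact mul_nonneg (es_dotProduct_ws_nonneg i p) (es_dotProduct_ws_nonneg j q)
  · rw [trace_transpose_vecMulVec_mul]
    fin_cases t <;> fin_cases i <;> fin_cases j <;>
      simp [OmegaEnt, es, dotProduct, mulVec, Fin.sum_univ_three] <;> norm_num

theorem trace_Ebar_Omegas (s : Fin 24) : trace (Ebarᵀ * Omegas s) = 1 := by
  refine Omegas_cases (P := fun M => trace (Ebarᵀ * M) = 1) (fun p q => ?_) (fun t => ?_) s
  · rw [Ebar, trace_transpose_vecMulVec_mul_vecMulVec]
    fin_cases p <;> fin_cases q <;> simp [ws, dotProduct, Fin.sum_univ_three]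
  · rw [Ebar, trace_transpose_vecMulVec_mul]
    fin_cases t <;> simp [OmegaEnt, dotProduct, mulVec, Fin.sum_univ_three]

theorem Wiring.outcome_mem_stdSimplex (v : Wiring) {Θ : Matrix (Fin 3) (Fin 3) ℝ}
    (hΘ : Θ ∈ convexHull ℝ (Set.range Omegas)) :
    (fun k => trace ((vecMulVec (es (v.effect k).1) (es (v.effect k).2))ᵀ * Θ) / 4)
      ∈ stdSimplex ℝ (Fin 2 × Fin 2) := by
  have hEbar : trace (Ebarᵀ * Θ) = 1 := trace_transpose_mul_eq_of_mem_convexHull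
    (by rintro _ ⟨s, rfl⟩; exact trace_Ebar_Omegas s) hΘ
  refine ⟨fun k => div_nonneg (le_trace_transpose_mul_of_mem_convexHull ?_ hΘ) zero_le_four, ?_⟩
  · rintro _ ⟨s, rfl⟩
    exact trace_es_Omegas_nonneg _ _ s
  · rw [← Finset.sum_div, ← trace_sum, ← Finset.sum_mul, ← transpose_sum,
      v.sum_vecMulVec_effect, transpose_smul, smul_mul, trace_smul, hEbar]
    norm_num

theorem PR_model_no_hypersignaling_general (m n : ℕ) (hn : 0 < n)
    (Θ : Fin m → Matrix (Fin 3) (Fin 3) ℝ)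
    (hΘ : ∀ x, Θ x ∈ convexHull ℝ (Set.range Omegas))
    (F : Fin n → Matrix (Fin 3) (Fin 3) ℝ)
    (hF : ∀ y, ∃ c : Fin 4 → Fin 4 → ℝ, (∀ i j, 0 ≤ c i j) ∧
      F y = ∑ i, ∑ j, c i j • Matrix.vecMulVec (es i) (es j))
    (hsum : ∑ y, F y = Ebar) :
    (Matrix.of fun x y => Matrix.trace ((F y)ᵀ * Θ x)) ∈ C m n 4 := by
  choose c hc hFc using hF
  simp only [hFc] at hsum
  obtain ⟨w, B, hw0, hw1, hB, hsim⟩ := exists_wiring_postprocessing hn hc hsum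
  set A : Wiring → Matrix (Fin m) (Fin 2 × Fin 2) ℝ := fun v =>
    of fun x k => trace ((vecMulVec (es (v.effect k).1) (es (v.effect k).2))ᵀ * Θ x) / 4
  have hp : (of fun x y => trace ((F y)ᵀ * Θ x)) = ∑ v, w v • (A v * B v) := by
    ext x y
    simp only [of_apply, hFc, transpose_sum, transpose_smul, Finset.sum_mul, smul_mul, trace_sum,
      trace_smul, smul_eq_mul, hsim]
    simp only [Matrix.sum_apply, Matrix.smul_apply, mul_apply, A, of_apply, smul_eq_mul,
      div_mul_eq_mul_div]
  rw [hp]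
  exact (convex_convexHull ℝ _).sum_mem (fun v _ => hw0 v) hw1 fun v _ =>
    mul_mem_C (by simp) (fun x => v.outcome_mem_stdSimplex (hΘ x)) (hB v)

/-- The PR Model (all 24 extremal states, but only factorized effects) satisfies
the no-hypersignaling principle: every correlation it produces lies in `C m n 4`. -/
theorem PR_model_no_hypersignaling (m n : ℕ) (hm : 0 < m) (hn : 0 < n)
    (Θ : Fin m → Matrix (Fin 3) (Fin 3) ℝ)
    (hΘ : ∀ x, Θ x ∈ convexHull ℝ (Set.range Omegas))
    (F : Fin n → Matrix (Fin 3) (Fin 3) ℝ)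
    (hF : ∀ y, ∃ c : Fin 4 → Fin 4 → ℝ, (∀ i j, 0 ≤ c i j) ∧
      F y = ∑ i, ∑ j, c i j • Matrix.vecMulVec (es i) (es j))
    (hsum : ∑ y, F y = Ebar) :
    (Matrix.of fun x y => Matrix.trace ((F y)ᵀ * Θ x)) ∈ C m n 4 :=
  PR_model_no_hypersignaling_general m n hn Θ hΘ F hF hsum
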